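/- There is no mixed diamond in microCCS: there do not exist distinct prefixes η₁ ≠ η₂ and processes S, S', T, T', R such that S --η₁--> S', T --η₂--> T', and η₂.S ‖ T' ‖ R ∼ S' ‖ η₁.T ‖ R. -/
import Mathlib


/-- CCS visible actions: a name `a` or a coname `ā`. -/
inductive Act where
  | inp : ℕ → Act
  | out : ℕ → Act
deriving DecidableEq

/-- The coaction. -/
def Act.co : Act → Act
  | .inp a => .out a
  | .out a => .inp a

/-- MicroCCS processes: nil, prefix, parallel composition. -/
inductive Proc where
  | nil : Proc
  | pre : Act → Proc → Proc
  | par : Proc → Proc → Proc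
deriving DecidableEq

/-- Transition labels: a visible action or τ. -/
inductive Lab where
  | act : Act → Lab
  | tau : Lab
deriving DecidableEq

/-- The standard CCS labelled transition system on microCCS. -/
inductive Step : Proc → Lab → Proc → Prop where
  | pre (η : Act) (P : Proc) : Step (.pre η P) (.act η) P
  | syn {P P' Q Q' : Proc} {η : Act} :
      Step P (.act η) P' → Step Q (.act η.co) Q' →
      Step (.par P Q) .tau (.par P' Q')
  | parL {P P' : Proc} {μ : Lab} (Q : Proc) :
      Step P μ P' → Step (.par P Q) μ (.par P' Q)
  | parR {Q Q' : Proc} {μ : Lab} (P : Proc) :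
      Step Q μ Q' → Step (.par P Q) μ (.par P Q')

/-- A (symmetric) bisimulation. -/
def IsBisim (R : Proc → Proc → Prop) : Prop :=
  (∀ P Q, R P Q → R Q P) ∧
  ∀ P Q μ P', R P Q → Step P μ P' → ∃ Q', Step Q μ Q' ∧ R P' Q'

/-- Strong bisimilarity: the union of all bisimulations. -/
def Bisim (P Q : Proc) : Prop := ∃ R, IsBisim R ∧ R P Q

/-- The size of a process: its number of prefixes. -/
def Proc.size : Proc → ℕ
  | .nil => 0
  | .pre _ P => 1 + P.size
  | .par P Q => P.size + Q.size

/-- Structural congruence: abelian monoid laws for parallel composition. -/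
inductive SC : Proc → Proc → Prop where
  | refl (P) : SC P P
  | symm : SC P Q → SC Q P
  | trans : SC P Q → SC Q R → SC P R
  | comm (P Q) : SC (.par P Q) (.par Q P)
  | assoc (P Q R) : SC (.par P (.par Q R)) (.par (.par P Q) R)
  | unit (P) : SC (.par P .nil) P
  | pre (η) : SC P Q → SC (.pre η P) (.pre η Q)
  | par : SC P P' → SC Q Q' → SC (.par P Q) (.par P' Q')

/-- `pow P k` is the k-fold parallel composition of `P`. -/
def pow (P : Proc) : ℕ → Proc
  | 0 => .nil
  | n+1 => .par P (pow P n)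

/-- One step of rewriting with the distribution law
    `η.(P ‖ (η.P)^k) ⇝ (η.P)^{k+1}` (k ≥ 1), modulo structural
    congruence, in any context. -/
inductive RW : Proc → Proc → Prop where
  | head {η : Act} {P : Proc} {k : ℕ} (hk : 1 ≤ k) :
      RW (.pre η (.par P (pow (.pre η P) k))) (pow (.pre η P) (k+1))
  | pre (η) : RW P P' → RW (.pre η P) (.pre η P')
  | parL (Q) : RW P P' → RW (.par P Q) (.par P' Q)
  | parR (P) : RW Q Q' → RW (.par P Q) (.par P Q')
  | congr : SC P P₁ → RW P₁ P₂ → SC P₂ P' → RW P P'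

/-- Reflexive-transitive closure of the distribution rewriting. -/
def Rws : Proc → Proc → Prop := Relation.ReflTransGen RW

/-- Normal forms for the distribution rewriting. -/
def NF (P : Proc) : Prop := ¬ ∃ P', RW P P'

/-- Prime processes. -/
def IsPrime (P : Proc) : Prop :=
  ¬ Bisim P .nil ∧ ∀ Q R, Bisim P (.par Q R) → Bisim Q .nil ∨ Bisim R .nil

/-! ### Auxiliary development for Statement 15 -/

/-- Visible-only bisimulation. -/
def VBisim (R : Proc → Proc → Prop) : Prop :=
  (∀ P Q, R P Q → R Q P) ∧
  ∀ P Q a P', R P Q → Step P (.act a) P' → ∃ Q', Step Q (.act a) Q' ∧ R P' Q'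

/-- Visible bisimilarity. -/
def VB (P Q : Proc) : Prop := ∃ R, VBisim R ∧ R P Q

/-- Contribution of action `a`: total size of toplevel `a`-headed components. -/
def nu (a : Act) : Proc → ℕ
  | .nil => 0
  | .pre b P => if b = a then 1 + P.size else 0
  | .par P Q => nu a P + nu a Q

/-- The `η`-front of a process. -/
def satP (η : Act) : Proc → Proc
  | .nil => .nil
  | .pre b P => if b = η then .pre b P else satP η P
  | .par P Q => .par (satP η P) (satP η Q)

/-- All toplevel components have head `η`. -/
def AllH (η : Act) : Proc → Prop
  | .nil => True
  | .pre b _ => b = η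
  | .par P Q => AllH η P ∧ AllH η Q

/-- Toplevel heads. -/
def headsOf : Proc → Finset Act
  | .nil => ∅
  | .pre b _ => {b}
  | .par P Q => headsOf P ∪ headsOf Q

lemma bisim_vb {P Q : Proc} (h : Bisim P Q) : VB P Q := by
  obtain ⟨R, ⟨hs, ht⟩, hpq⟩ := h
  exact ⟨R, ⟨hs, fun P Q a P' hR hst => ht P Q _ P' hR hst⟩, hpq⟩

/-! #### Step basics -/

lemma step_pre_inv {b : Act} {P : Proc} {μ Z} (h : Step (.pre b P) μ Z) :
    μ = .act b ∧ Z = P := by cases h; exact ⟨rfl, rfl⟩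

lemma step_nil_inv {μ Z} (h : Step .nil μ Z) : False := by cases h

lemma step_par_inv {P Q : Proc} {a : Act} {Z} (h : Step (.par P Q) (.act a) Z) :
    (∃ P', Step P (.act a) P' ∧ Z = .par P' Q) ∨
    (∃ Q', Step Q (.act a) Q' ∧ Z = .par P Q') := by
  cases h with
  | parL Q h => exact Or.inl ⟨_, h, rfl⟩
  | parR P h => exact Or.inr ⟨_, h, rfl⟩

lemma step_act_size : ∀ {P μ P'}, Step P μ P' → ∀ {a : Act}, μ = .act a →
    P.size = P'.size + 1 := by
  intro P μ P' h
  induction h with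
  | pre η P => intro a _; simp [Proc.size]; omega
  | syn h1 h2 ih1 ih2 => intro a h; cases h
  | parL Q h ih => intro a ha; have := ih ha; simp [Proc.size]; omega
  | parR P h ih => intro a ha; have := ih ha; simp [Proc.size]; omega

lemma step_exists : ∀ (P : Proc), 0 < P.size → ∃ a P', Step P (.act a) P' := by
  intro P
  induction P with
  | nil => simp [Proc.size]
  | pre b c ih => intro _; exact ⟨b, c, Step.pre b c⟩
  | par P Q ihP ihQ =>
    intro h
    simp [Proc.size] at h
    rcases Nat.eq_zero_or_pos P.size with hp | hp
    · obtain ⟨a, Q', hs⟩ := ihQ (by omega)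
      exact ⟨a, .par P Q', Step.parR P hs⟩
    · obtain ⟨a, P', hs⟩ := ihP hp
      exact ⟨a, .par P' Q, Step.parL Q hs⟩
/-! #### SC basics -/

lemma sc_swap (A B C : Proc) : SC (.par A (.par B C)) (.par B (.par A C)) :=
  (SC.assoc A B C).trans (((SC.comm A B).par (SC.refl C)).trans (SC.symm (SC.assoc B A C)))

lemma sc_size {P Q : Proc} (h : SC P Q) : P.size = Q.size := by
  induction h with
  | refl _ => rfl
  | symm _ ih => omega
  | trans _ _ ih1 ih2 => omega
  | comm P Q => simp [Proc.size]; omega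
  | assoc P Q R => simp [Proc.size]; omega
  | unit P => simp [Proc.size]
  | pre η _ ih => simp [Proc.size]; omega
  | par _ _ ih1 ih2 => simp [Proc.size]; omega

lemma sc_nu {P Q : Proc} (h : SC P Q) (a : Act) : nu a P = nu a Q := by
  induction h with
  | refl _ => rfl
  | symm _ ih => omega
  | trans _ _ ih1 ih2 => omega
  | comm P Q => simp [nu]; omega
  | assoc P Q R => simp [nu]; omega
  | unit P => simp [nu]
  | pre η h ih =>
    simp only [nu]
    rw [sc_size h]
  | par _ _ ih1 ih2 => simp [nu]; omega

lemma sc_allH {P Q : Proc} (h : SC P Q) (η : Act) : AllH η P ↔ AllH η Q := by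
  induction h with
  | refl _ => rfl
  | symm _ ih => exact ih.symm
  | trans _ _ ih1 ih2 => exact ih1.trans ih2
  | comm P Q => simp [AllH]; tauto
  | assoc P Q R => simp [AllH]; tauto
  | unit P => simp [AllH]
  | pre η _ _ => simp [AllH]
  | par _ _ ih1 ih2 => simp [AllH]; tauto

lemma sc_sat {P Q : Proc} (h : SC P Q) (η : Act) : SC (satP η P) (satP η Q) := by
  induction h with
  | refl P => exact SC.refl _
  | symm _ ih => exact ih.symm
  | trans _ _ ih1 ih2 => exact ih1.trans ih2
  | comm P Q => exact SC.comm _ _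
  | assoc P Q R => exact SC.assoc _ _ _
  | unit P => exact SC.unit _
  | @pre P Q η' h ih =>
    by_cases hb : η' = η
    · simp only [satP, if_pos hb]; exact SC.pre η' h
    · simpa only [satP, if_neg hb] using ih
  | par _ _ ih1 ih2 => exact ih1.par ih2

/-- Transfer of visible steps along SC (both directions). -/
lemma sc_step {P Q : Proc} (h : SC P Q) :
    (∀ a P', Step P (.act a) P' → ∃ Q', Step Q (.act a) Q' ∧ SC P' Q') ∧
    (∀ a Q', Step Q (.act a) Q' → ∃ P', Step P (.act a) P' ∧ SC P' Q') := by
  induction h with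
  | refl P => exact ⟨fun a P' h => ⟨P', h, SC.refl _⟩, fun a P' h => ⟨P', h, SC.refl _⟩⟩
  | symm _ ih =>
    obtain ⟨f, g⟩ := ih
    exact ⟨fun a Q' h => (g a Q' h).imp (fun P' ⟨hs, hsc⟩ => ⟨hs, hsc.symm⟩),
           fun a P' h => (f a P' h).imp (fun Q' ⟨hs, hsc⟩ => ⟨hs, hsc.symm⟩)⟩
  | trans _ _ ih1 ih2 =>
    obtain ⟨f1, g1⟩ := ih1; obtain ⟨f2, g2⟩ := ih2
    constructor
    · intro a P' h
      obtain ⟨M, hM, h1⟩ := f1 a P' h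
      obtain ⟨Q', hQ', h2⟩ := f2 a M hM
      exact ⟨Q', hQ', h1.trans h2⟩
    · intro a Q' h
      obtain ⟨M, hM, h2⟩ := g2 a Q' h
      obtain ⟨P', hP', h1⟩ := g1 a M hM
      exact ⟨P', hP', h1.trans h2⟩
  | comm P Q =>
    constructor
    · intro a Z h
      rcases step_par_inv h with ⟨P', hs, rfl⟩ | ⟨Q', hs, rfl⟩
      · exact ⟨.par Q P', Step.parR Q hs, SC.comm _ _⟩
      · exact ⟨.par Q' P, Step.parL P hs, SC.comm _ _⟩
    · intro a Z h
      rcases step_par_inv h with ⟨Q', hs, rfl⟩ | ⟨P', hs, rfl⟩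
      · exact ⟨.par P Q', Step.parR P hs, SC.comm _ _⟩
      · exact ⟨.par P' Q, Step.parL Q hs, SC.comm _ _⟩
  | assoc P Q R =>
    constructor
    · intro a Z h
      rcases step_par_inv h with ⟨P', hs, rfl⟩ | ⟨W, hs, rfl⟩
      · exact ⟨.par (.par P' Q) R, Step.parL R (Step.parL Q hs), SC.assoc _ _ _⟩
      · rcases step_par_inv hs with ⟨Q', hs2, rfl⟩ | ⟨R', hs2, rfl⟩
        · exact ⟨.par (.par P Q') R, Step.parL R (Step.parR P hs2), SC.assoc _ _ _⟩
        · exact ⟨.par (.par P Q) R', Step.parR _ hs2, SC.assoc _ _ _⟩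
    · intro a Z h
      rcases step_par_inv h with ⟨W, hs, rfl⟩ | ⟨R', hs, rfl⟩
      · rcases step_par_inv hs with ⟨P', hs2, rfl⟩ | ⟨Q', hs2, rfl⟩
        · exact ⟨.par P' (.par Q R), Step.parL _ hs2, SC.assoc _ _ _⟩
        · exact ⟨.par P (.par Q' R), Step.parR _ (Step.parL R hs2), SC.assoc _ _ _⟩
      · exact ⟨.par P (.par Q R'), Step.parR _ (Step.parR Q hs), SC.assoc _ _ _⟩
  | unit P =>
    constructor
    · intro a Z h
      rcases step_par_inv h with ⟨P', hs, rfl⟩ | ⟨n', hs, rfl⟩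
      · exact ⟨P', hs, SC.unit _⟩
      · exact absurd hs step_nil_inv
    · intro a P' h
      exact ⟨.par P' .nil, Step.parL _ h, SC.unit _⟩
  | @pre P Q η h ih =>
    constructor
    · intro a Z hs
      obtain ⟨ha, rfl⟩ := step_pre_inv hs
      cases ha
      exact ⟨Q, Step.pre η Q, h⟩
    · intro a Z hs
      obtain ⟨ha, rfl⟩ := step_pre_inv hs
      cases ha
      exact ⟨P, Step.pre η P, h⟩
  | @par P P' Q Q' h1 h2 ih1 ih2 =>
    constructor
    · intro a Z hs
      rcases step_par_inv hs with ⟨W, hw, rfl⟩ | ⟨W, hw, rfl⟩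
      · obtain ⟨W', hw', hsc⟩ := ih1.1 a W hw
        exact ⟨.par W' Q', Step.parL Q' hw', hsc.par h2⟩
      · obtain ⟨W', hw', hsc⟩ := ih2.1 a W hw
        exact ⟨.par P' W', Step.parR P' hw', h1.par hsc⟩
    · intro a Z hs
      rcases step_par_inv hs with ⟨W, hw, rfl⟩ | ⟨W, hw, rfl⟩
      · obtain ⟨W', hw', hsc⟩ := ih1.2 a W hw
        exact ⟨.par W' Q, Step.parL Q hw', hsc.par h2⟩
      · obtain ⟨W', hw', hsc⟩ := ih2.2 a W hw
        exact ⟨.par P W', Step.parR P hw', h1.par hsc⟩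

/-- Every visible step fires the head of a toplevel component. -/
lemma step_decomp : ∀ {P μ P'}, Step P μ P' → ∀ {a : Act}, μ = .act a →
    ∃ c M, SC P (.par (.pre a c) M) ∧ SC P' (.par c M) := by
  intro P μ P' h
  induction h with
  | pre η P =>
    intro a ha
    cases ha
    exact ⟨P, .nil, (SC.unit _).symm, (SC.unit _).symm⟩
  | syn _ _ _ _ => intro a ha; cases ha
  | parL Q h ih =>
    intro a ha
    obtain ⟨c, M, h1, h2⟩ := ih ha
    exact ⟨c, .par M Q, (h1.par (SC.refl Q)).trans (SC.symm (SC.assoc _ _ _)),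
           (h2.par (SC.refl Q)).trans (SC.symm (SC.assoc _ _ _))⟩
  | parR P h ih =>
    intro a ha
    obtain ⟨c, M, h1, h2⟩ := ih ha
    exact ⟨c, .par P M, ((SC.refl P).par h1).trans (sc_swap _ _ _),
           ((SC.refl P).par h2).trans (sc_swap _ _ _)⟩

lemma nu_pos_decomp {β : Act} : ∀ {X : Proc}, 0 < nu β X →
    ∃ c M, SC X (.par (.pre β c) M) := by
  intro X
  induction X with
  | nil => intro h; simp [nu] at h
  | pre b c ih =>
    intro h
    simp only [nu] at h
    by_cases hb : b = β
    · cases hb; exact ⟨c, .nil, (SC.unit _).symm⟩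
    · rw [if_neg hb] at h; omega
  | par P Q ihP ihQ =>
    intro h
    simp only [nu] at h
    rcases Nat.eq_zero_or_pos (nu β P) with hp | hp
    · obtain ⟨c, M, hsc⟩ := ihQ (by omega)
      exact ⟨c, .par P M, ((SC.refl P).par hsc).trans (sc_swap _ _ _)⟩
    · obtain ⟨c, M, hsc⟩ := ihP hp
      exact ⟨c, .par M Q, (hsc.par (SC.refl Q)).trans (SC.symm (SC.assoc _ _ _))⟩
/-! #### VB basics -/

lemma VB.symm {P Q : Proc} (h : VB P Q) : VB Q P := by
  obtain ⟨R, hR, hpq⟩ := h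
  exact ⟨R, hR, hR.1 _ _ hpq⟩

lemma vb_step {P Q : Proc} (h : VB P Q) {a P'} (hs : Step P (.act a) P') :
    ∃ Q', Step Q (.act a) Q' ∧ VB P' Q' := by
  obtain ⟨R, hR, hpq⟩ := h
  obtain ⟨Q', hQ', hR'⟩ := hR.2 _ _ _ _ hpq hs
  exact ⟨Q', hQ', ⟨R, hR, hR'⟩⟩

lemma VB.trans {P Q Z : Proc} (h1 : VB P Q) (h2 : VB Q Z) : VB P Z := by
  refine ⟨fun U V => ∃ M, VB U M ∧ VB M V, ⟨?_, ?_⟩, Q, h1, h2⟩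
  · rintro U V ⟨M, hUM, hMV⟩; exact ⟨M, hMV.symm, hUM.symm⟩
  · rintro U V a U' ⟨M, hUM, hMV⟩ hs
    obtain ⟨M', hsM, hUM'⟩ := vb_step hUM hs
    obtain ⟨V', hsV, hMV'⟩ := vb_step hMV hsM
    exact ⟨V', hsV, M', hUM', hMV'⟩

lemma sc_vb {P Q : Proc} (h : SC P Q) : VB P Q := by
  refine ⟨SC, ⟨fun _ _ h => h.symm, ?_⟩, h⟩
  intro U V a U' hUV hs
  exact (sc_step hUV).1 a U' hs

lemma vb_parR {U V : Proc} (W : Proc) (h : VB U V) : VB (.par W U) (.par W V) := by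
  refine ⟨fun P Q => ∃ W' U' V', P = .par W' U' ∧ Q = .par W' V' ∧ VB U' V', ⟨?_, ?_⟩,
    W, U, V, rfl, rfl, h⟩
  · rintro P Q ⟨W', U', V', rfl, rfl, h'⟩; exact ⟨W', V', U', rfl, rfl, h'.symm⟩
  · rintro P Q a P' ⟨W', U', V', rfl, rfl, h'⟩ hs
    rcases step_par_inv hs with ⟨W'', hw, rfl⟩ | ⟨U'', hu, rfl⟩
    · exact ⟨.par W'' V', Step.parL _ hw, W'', U', V', rfl, rfl, h'⟩
    · obtain ⟨V'', hv, h''⟩ := vb_step h' hu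
      exact ⟨.par W' V'', Step.parR _ hv, W', U'', V'', rfl, rfl, h''⟩

lemma vb_parL {U V : Proc} (W : Proc) (h : VB U V) : VB (.par U W) (.par V W) :=
  ((sc_vb (SC.comm U W)).trans (vb_parR W h)).trans (sc_vb (SC.comm W V))

lemma vb_size : ∀ (n : ℕ) {P Q : Proc}, P.size ≤ n → VB P Q → P.size = Q.size := by
  intro n
  induction n with
  | zero =>
    intro P Q hP h
    by_contra hne
    obtain ⟨a, Q', hs⟩ := step_exists Q (by omega)
    obtain ⟨P', hsP, _⟩ := vb_step h.symm hs
    have := step_act_size hsP rfl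
    omega
  | succ n ih =>
    intro P Q hP h
    rcases Nat.eq_zero_or_pos P.size with h0 | h0
    · by_contra hne
      obtain ⟨a, Q', hs⟩ := step_exists Q (by omega)
      obtain ⟨P', hsP, _⟩ := vb_step h.symm hs
      have := step_act_size hsP rfl
      omega
    · obtain ⟨a, P', hsP⟩ := step_exists P h0
      obtain ⟨Q', hsQ, h'⟩ := vb_step h hsP
      have e1 := step_act_size hsP rfl
      have e2 := step_act_size hsQ rfl
      have := ih (P := P') (Q := Q') (by omega) h'
      omega

lemma vb_size' {P Q : Proc} (h : VB P Q) : P.size = Q.size :=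
  vb_size P.size le_rfl h

/-! #### sat and AllH lemmas -/

lemma allH_sat (η : Act) : ∀ P, AllH η (satP η P) := by
  intro P
  induction P with
  | nil => trivial
  | pre b c ih =>
    by_cases hb : b = η
    · simp [satP, if_pos hb, AllH, hb]
    · simpa [satP, if_neg hb] using ih
  | par P Q ihP ihQ => exact ⟨ihP, ihQ⟩

lemma satP_eq_of_allH {η : Act} : ∀ {P : Proc}, AllH η P → satP η P = P := by
  intro P
  induction P with
  | nil => intro _; rfl
  | pre b c ih => intro h; simp only [AllH] at h; simp [satP, if_pos h]
  | par P Q ihP ihQ =>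
    intro h
    obtain ⟨h1, h2⟩ := h
    simp [satP, ihP h1, ihQ h2]

lemma satP_size_le (η : Act) : ∀ P : Proc, (satP η P).size ≤ P.size := by
  intro P
  induction P with
  | nil => simp [satP]
  | pre b c ih =>
    by_cases hb : b = η
    · simp [satP, if_pos hb]
    · simp only [satP, if_neg hb, Proc.size]; omega
  | par P Q ihP ihQ => simp only [satP, Proc.size]; omega

lemma allH_step_label {η : Act} : ∀ {P : Proc} {a P'}, AllH η P → Step P (.act a) P' →
    a = η := by
  intro P
  induction P with
  | nil => intro a P' _ hs; exact absurd hs step_nil_inv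
  | pre b c ih =>
    intro a P' hh hs
    obtain ⟨ha, _⟩ := step_pre_inv hs
    cases ha
    exact hh
  | par P Q ihP ihQ =>
    intro a P' hh hs
    rcases step_par_inv hs with ⟨W, hw, _⟩ | ⟨W, hw, _⟩
    · exact ihP hh.1 hw
    · exact ihQ hh.2 hw

lemma exists_nonall_step {η : Act} : ∀ {P : Proc}, ¬ AllH η P →
    ∃ a P', a ≠ η ∧ Step P (.act a) P' := by
  intro P
  induction P with
  | nil => intro h; exact absurd trivial h
  | pre b c ih =>
    intro h
    exact ⟨b, c, h, Step.pre b c⟩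
  | par P Q ihP ihQ =>
    intro h
    rw [show AllH η (.par P Q) = (AllH η P ∧ AllH η Q) from rfl] at h
    by_cases hP : AllH η P
    · obtain ⟨a, Q', ha, hs⟩ := ihQ (fun hQ => h ⟨hP, hQ⟩)
      exact ⟨a, .par P Q', ha, Step.parR P hs⟩
    · obtain ⟨a, P', ha, hs⟩ := ihP hP
      exact ⟨a, .par P' Q, ha, Step.parL Q hs⟩

lemma allH_of_size_zero {η : Act} : ∀ {P : Proc}, P.size = 0 → AllH η P := by
  intro P
  induction P with
  | nil => intro _; trivial
  | pre b c ih => intro h; simp [Proc.size] at h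
  | par P Q ihP ihQ =>
    intro h
    simp only [Proc.size] at h
    exact ⟨ihP (by omega), ihQ (by omega)⟩

lemma sat_step_eq {η : Act} : ∀ {P μ P'}, Step P μ P' → ∀ {a : Act}, μ = .act a → a ≠ η →
    satP η P' = satP η P := by
  intro P μ P' h
  induction h with
  | pre b P =>
    intro a ha hne
    cases ha
    simp [satP, if_neg hne]
  | syn _ _ _ _ => intro a ha; cases ha
  | parL Q h ih =>
    intro a ha hne
    simp only [satP]
    rw [ih ha hne]
  | parR P h ih =>
    intro a ha hne
    simp only [satP]
    rw [ih ha hne]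

/-! #### Cancellation -/

lemma vb_chain : ∀ (n : ℕ) (A : Proc), A.size ≤ n →
    (∀ B : Proc, B.size < A.size → ∀ U V, VB (.par U B) (.par V B) → VB U V) →
    ∀ {a : Act} {B X' Y : Proc}, Step A (.act a) B → VB (.par X' A) (.par Y B) →
    ∃ Y', Step Y (.act a) Y' ∧ VB X' Y' := by
  intro n
  induction n with
  | zero =>
    intro A hA _ a B X' Y hs _
    have := step_act_size hs rfl
    omega
  | succ n ih =>
    intro A hA canc a B X' Y hs hvb
    have hsz := step_act_size hs rfl
    obtain ⟨Z, hZs, hZ⟩ := vb_step hvb (Step.parR X' hs)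
    rcases step_par_inv hZs with ⟨Y', hy, rfl⟩ | ⟨B', hb, rfl⟩
    · exact ⟨Y', hy, canc B (by omega) X' Y' hZ⟩
    · exact ih B (by omega)
        (fun B'' hB'' => canc B'' (by omega)) hb hZ

lemma vb_canc : ∀ (n : ℕ) (R : Proc), R.size ≤ n →
    ∀ P Q, VB (.par P R) (.par Q R) → VB P Q := by
  intro n
  induction n with
  | zero =>
    intro R hR P Q h
    -- R has size 0; still use the chain strategy with no absorptions possible
    refine ⟨fun U V => VB U V ∨ VB (.par U R) (.par V R), ⟨?_, ?_⟩, Or.inr h⟩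
    · rintro U V (h' | h'); exacts [Or.inl h'.symm, Or.inr h'.symm]
    · rintro U V a U' (h' | h') hs
      · obtain ⟨V', hv, h''⟩ := vb_step h' hs
        exact ⟨V', hv, Or.inl h''⟩
      · obtain ⟨Z, hZs, hZ⟩ := vb_step h' (Step.parL R hs)
        rcases step_par_inv hZs with ⟨V', hv, rfl⟩ | ⟨R', hr, rfl⟩
        · exact ⟨V', hv, Or.inr hZ⟩
        · exact absurd (step_act_size hr rfl) (by omega)
  | succ n ih =>
    intro R hR P Q h
    refine ⟨fun U V => VB U V ∨ VB (.par U R) (.par V R), ⟨?_, ?_⟩, Or.inr h⟩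
    · rintro U V (h' | h'); exacts [Or.inl h'.symm, Or.inr h'.symm]
    · rintro U V a U' (h' | h') hs
      · obtain ⟨V', hv, h''⟩ := vb_step h' hs
        exact ⟨V', hv, Or.inl h''⟩
      · obtain ⟨Z, hZs, hZ⟩ := vb_step h' (Step.parL R hs)
        rcases step_par_inv hZs with ⟨V', hv, rfl⟩ | ⟨R', hr, rfl⟩
        · exact ⟨V', hv, Or.inr hZ⟩
        · obtain ⟨V', hv, h''⟩ := vb_chain R.size R le_rfl
            (fun B hB => ih B (by omega)) hr hZ
          exact ⟨V', hv, Or.inl h''⟩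

lemma vb_canc' {R P Q : Proc} (h : VB (.par P R) (.par Q R)) : VB P Q :=
  vb_canc R.size R le_rfl P Q h
/-! #### The saturation lemma -/

lemma vb_sat_aux (η : Act) : ∀ (n : ℕ) {P Q : Proc}, P.size ≤ n → VB P Q →
    VB (satP η P) (satP η Q) := by
  intro n
  induction n with
  | zero =>
    intro P Q hP h
    have hQ : Q.size = 0 := by have := vb_size' h; omega
    rw [satP_eq_of_allH (allH_of_size_zero (by omega)),
        satP_eq_of_allH (allH_of_size_zero hQ)]
    exact h
  | succ n ih =>
    intro P Q hP h
    by_cases hAP : AllH η P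
    · by_cases hAQ : AllH η Q
      · rw [satP_eq_of_allH hAP, satP_eq_of_allH hAQ]; exact h
      · exfalso
        obtain ⟨a, Q', ha, hs⟩ := exists_nonall_step hAQ
        obtain ⟨P', hsP, _⟩ := vb_step h.symm hs
        exact ha (allH_step_label hAP hsP)
    · obtain ⟨a, P', ha, hs⟩ := exists_nonall_step hAP
      obtain ⟨Q', hsQ, h'⟩ := vb_step h hs
      have e1 := sat_step_eq hs rfl ha
      have e2 := sat_step_eq hsQ rfl ha
      have hsz := step_act_size hs rfl
      have := ih (P := P') (Q := Q') (by omega) h'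
      rwa [e1, e2] at this

lemma vb_sat {η : Act} {P Q : Proc} (h : VB P Q) : VB (satP η P) (satP η Q) :=
  vb_sat_aux η P.size le_rfl h

/-! #### head sums -/

lemma nu_le_size (a : Act) : ∀ P : Proc, nu a P ≤ P.size := by
  intro P
  induction P with
  | nil => simp [nu]
  | pre b c ih =>
    by_cases hb : b = a
    · simp [nu, if_pos hb, Proc.size]
    · simp [nu, if_neg hb]
  | par P Q ihP ihQ => simp only [nu, Proc.size]; omega

lemma nu_not_mem (a : Act) : ∀ {P : Proc}, a ∉ headsOf P → nu a P = 0 := by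
  intro P
  induction P with
  | nil => intro _; rfl
  | pre b c ih =>
    intro h
    simp only [headsOf, Finset.mem_singleton] at h
    simp [nu, if_neg (fun hb : b = a => h hb.symm)]
  | par P Q ihP ihQ =>
    intro h
    simp only [headsOf, Finset.mem_union] at h
    push_neg at h
    simp [nu, ihP h.1, ihQ h.2]

lemma size_eq_sum_nu : ∀ (P : Proc) (s : Finset Act), headsOf P ⊆ s →
    P.size = ∑ a ∈ s, nu a P := by
  intro P
  induction P with
  | nil => intro s _; simp [Proc.size, nu]
  | pre b c ih =>
    intro s hsub
    have hb : b ∈ s := hsub (by simp [headsOf])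
    have : ∀ a ∈ s, nu a (.pre b c) = if b = a then 1 + c.size else 0 := fun a _ => rfl
    rw [Finset.sum_congr rfl this, Finset.sum_ite_eq s b (fun _ => 1 + c.size), if_pos hb]
    rfl
  | par P Q ihP ihQ =>
    intro s hsub
    simp only [headsOf, Finset.union_subset_iff] at hsub
    have : ∀ a ∈ s, nu a (.par P Q) = nu a P + nu a Q := fun a _ => rfl
    rw [Finset.sum_congr rfl this, Finset.sum_add_distrib]
    simp only [Proc.size]
    rw [ihP s hsub.1, ihQ s hsub.2]
/-! #### The key mutual induction -/

def UStmt (m : ℕ) : Prop :=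
  ∀ (η β : Act) (X Y A B : Proc), β ≠ η → AllH η A → AllH η B →
    X.size + Y.size ≤ m → VB (.par X A) (.par B Y) → nu β X = nu β Y

def LStmt (m : ℕ) : Prop :=
  ∀ (η β : Act) (X Y : Proc), β ≠ η → X.size + Y.size ≤ m →
    VB (.par (.pre η X) (satP η Y)) (.par (satP η X) (.pre η Y)) → nu β X = nu β Y

lemma ucore (m : ℕ)
    (ihU : ∀ k, k < m → UStmt k) (ihL : ∀ k, k < m → LStmt k)
    {η β : Act} {X Y A B : Proc} (hβη : β ≠ η) (hA : AllH η A) (hB : AllH η B)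
    (hm : X.size + Y.size ≤ m) (hvb : VB (.par X A) (.par B Y))
    (hpos : 0 < nu β X) : nu β X = nu β Y := by
  obtain ⟨c, M, hscX⟩ := nu_pos_decomp hpos
  have hvb' : VB (.par (.par (.pre β c) M) A) (.par B Y) :=
    (sc_vb (hscX.par (SC.refl A))).symm.trans hvb
  have st : Step (.par (.par (.pre β c) M) A) (.act β) (.par (.par c M) A) :=
    Step.parL A (Step.parL M (Step.pre β c))
  obtain ⟨Z, stZ, hZ⟩ := vb_step hvb' st
  rcases step_par_inv stZ with ⟨B₁, stB, rfl⟩ | ⟨Y₁, stY, rfl⟩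
  · exact absurd (allH_step_label hB stB) hβη
  obtain ⟨d, N, hscY, hscY₁⟩ := step_decomp stY rfl
  -- size bookkeeping
  have hsX : X.size = 1 + c.size + M.size := by
    have := sc_size hscX; simp [Proc.size] at this; omega
  have hsY : Y.size = Y₁.size + 1 := step_act_size stY rfl
  have hsY₁ : Y₁.size = d.size + N.size := by
    have := sc_size hscY₁; simpa [Proc.size] using this
  have hsYdN : Y.size = 1 + d.size + N.size := by
    have := sc_size hscY; simp [Proc.size] at this; omega
  -- the matched residual pair, one level down
  have e1 : nu β (.par c M) = nu β Y₁ := by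
    have hk : (Proc.par c M).size + Y₁.size < m := by
      simp only [Proc.size]; omega
    exact ihU _ hk η β (.par c M) Y₁ A B hβη hA hB le_rfl hZ
  have e1' : nu β c + nu β M = nu β d + nu β N := by
    have h2 := sc_nu hscY₁ β
    simp only [nu] at e1 h2
    omega
  -- saturation instances
  have hs1 := vb_sat (η := β) hvb'
  have hs2 := vb_sat (η := β) hZ
  have scL1 : SC (satP β (.par (.par (.pre β c) M) A))
      (.par (.pre β c) (.par (satP β M) (satP β A))) := by
    simp only [satP, if_pos rfl]
    exact SC.symm (SC.assoc _ _ _)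
  have scR1 : SC (satP β (.par B Y))
      (.par (.pre β d) (.par (satP β B) (satP β N))) := by
    simp only [satP]
    have h1 : SC (satP β Y) (.par (.pre β d) (satP β N)) := by
      have := sc_sat hscY β
      simpa [satP] using this
    exact ((SC.refl _).par h1).trans (sc_swap _ _ _)
  have I₁ : VB (.par (.pre β c) (.par (satP β M) (satP β A)))
      (.par (.pre β d) (.par (satP β B) (satP β N))) :=
    ((sc_vb scL1).symm.trans hs1).trans (sc_vb scR1)
  have scL2 : SC (satP β (.par (.par c M) A))
      (.par (satP β c) (.par (satP β M) (satP β A))) := by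
    simp only [satP]
    exact SC.symm (SC.assoc _ _ _)
  have scR2 : SC (satP β (.par B Y₁))
      (.par (satP β d) (.par (satP β B) (satP β N))) := by
    simp only [satP]
    have h1 : SC (satP β Y₁) (.par (satP β d) (satP β N)) := by
      have := sc_sat hscY₁ β
      simpa [satP] using this
    exact ((SC.refl _).par h1).trans (sc_swap _ _ _)
  have I₂ : VB (.par (satP β c) (.par (satP β M) (satP β A)))
      (.par (satP β d) (.par (satP β B) (satP β N))) :=
    ((sc_vb scL2).symm.trans hs2).trans (sc_vb scR2)
  -- the monoid trick: cancel the common flank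
  have chain : VB
      (.par (.par (.pre β c) (satP β d)) (.par (satP β B) (satP β N)))
      (.par (.par (satP β c) (.pre β d)) (.par (satP β B) (satP β N))) := by
    refine (sc_vb (SC.symm (SC.assoc _ _ _))).trans ?_
    refine (vb_parR _ I₂.symm).trans ?_
    refine (sc_vb (sc_swap _ _ _)).trans ?_
    refine (vb_parR _ I₁).trans ?_
    exact sc_vb (SC.assoc _ _ _)
  have hl : VB (.par (.pre β c) (satP β d)) (.par (satP β c) (.pre β d)) :=
    vb_canc' chain
  -- conclusions of the locked lemma at all other actions
  have hνcd : ∀ γ : Act, γ ≠ β → nu γ c = nu γ d := by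
    intro γ hγ
    have hk : c.size + d.size < m := by omega
    exact ihL _ hk β γ c d hγ le_rfl hl
  -- arithmetic
  have hsubc : headsOf c ⊆ insert β (headsOf c ∪ headsOf d) := by
    intro a ha; simp [ha]
  have hsubd : headsOf d ⊆ insert β (headsOf c ∪ headsOf d) := by
    intro a ha; simp [ha]
  have hβmem : β ∈ insert β (headsOf c ∪ headsOf d) := by simp
  have hc2 : nu β c + ∑ a ∈ (insert β (headsOf c ∪ headsOf d)).erase β, nu a c = c.size := by
    rw [size_eq_sum_nu c _ hsubc]
    exact Finset.add_sum_erase _ (fun a => nu a c) hβmem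
  have hd2 : nu β d + ∑ a ∈ (insert β (headsOf c ∪ headsOf d)).erase β, nu a d = d.size := by
    rw [size_eq_sum_nu d _ hsubd]
    exact Finset.add_sum_erase _ (fun a => nu a d) hβmem
  have tEq : ∑ a ∈ (insert β (headsOf c ∪ headsOf d)).erase β, nu a c
      = ∑ a ∈ (insert β (headsOf c ∪ headsOf d)).erase β, nu a d :=
    Finset.sum_congr rfl (fun γ hγ => hνcd γ (Finset.ne_of_mem_erase hγ))
  have nuX : nu β X = 1 + c.size + nu β M := by
    rw [sc_nu hscX β]; simp [nu]
  have nuY : nu β Y = 1 + d.size + nu β N := by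
    rw [sc_nu hscY β]; simp [nu]
  omega

lemma lcore (m : ℕ) (hUm : UStmt m)
    (ihU : ∀ k, k < m → UStmt k) (ihL : ∀ k, k < m → LStmt k)
    {η β : Act} {X Y : Proc} (hβη : β ≠ η) (hm : X.size + Y.size ≤ m)
    (hsz : (satP η Y).size ≤ X.size)
    (hvb : VB (.par (.pre η X) (satP η Y)) (.par (satP η X) (.pre η Y))) :
    nu β X = nu β Y := by
  have st : Step (.par (satP η X) (.pre η Y)) (.act η) (.par (satP η X) Y) :=
    Step.parR _ (Step.pre η Y)
  obtain ⟨Z, stZ, hZ⟩ := vb_step hvb.symm st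
  rcases step_par_inv stZ with ⟨X₁, stX, rfl⟩ | ⟨S', stS, rfl⟩
  · obtain ⟨-, hX1⟩ := step_pre_inv stX
    rw [hX1] at hZ
    exact hUm η β X Y (satP η Y) (satP η X) hβη (allH_sat η Y) (allH_sat η X) hm hZ.symm
  · obtain ⟨E, G, hsc1, hsc2⟩ := step_decomp stS rfl
    have hallG : AllH η G := ((sc_allH hsc1 η).1 (allH_sat η Y)).2
    have hsE : (satP η Y).size = 1 + E.size + G.size := by
      have := sc_size hsc1; simp [Proc.size] at this; omega
    have hsatY := satP_size_le η Y
    -- (iia) : relate E and Y one level down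
    have scA : SC (.par E (.par (.pre η X) G)) (.par (.pre η X) S') :=
      (sc_swap _ _ _).trans ((SC.refl _).par hsc2.symm)
    have hvbA : VB (.par E (.par (.pre η X) G)) (.par (satP η X) Y) :=
      (sc_vb scA).trans hZ.symm
    have e_EY : nu β E = nu β Y := by
      have hk : E.size + Y.size < m := by omega
      exact ihU _ hk η β E Y (.par (.pre η X) G) (satP η X) hβη ⟨rfl, hallG⟩
        (allH_sat η X) le_rfl hvbA
    -- (iib) : the smaller locked instance
    have hs := vb_sat (η := η) hZ.symm
    have scL : SC (satP η (.par (.pre η X) S'))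
        (.par (.par (.pre η X) (satP η E)) G) := by
      simp only [satP, if_pos rfl]
      have h1 : SC (satP η S') (.par (satP η E) G) := by
        have h2 := sc_sat hsc2 η
        simp only [satP] at h2
        rwa [satP_eq_of_allH hallG] at h2
      exact ((SC.refl _).par h1).trans (SC.assoc _ _ _)
    have scR : SC (satP η (.par (satP η X) Y))
        (.par (.par (satP η X) (.pre η E)) G) := by
      simp only [satP]
      rw [satP_eq_of_allH (allH_sat η X)]
      exact ((SC.refl _).par hsc1).trans (SC.assoc _ _ _)
    have hl' : VB (.par (.pre η X) (satP η E)) (.par (satP η X) (.pre η E)) :=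
      vb_canc' (((sc_vb scL).symm.trans hs).trans (sc_vb scR))
    have e_XE : nu β X = nu β E := by
      have hk : X.size + E.size < m := by omega
      exact ihL _ hk η β X E hβη le_rfl hl'
    omega

theorem UL : ∀ m, UStmt m ∧ LStmt m := by
  intro m
  induction m using Nat.strong_induction_on with
  | _ m ih =>
    have ihU : ∀ k, k < m → UStmt k := fun k hk => (ih k hk).1
    have ihL : ∀ k, k < m → LStmt k := fun k hk => (ih k hk).2
    have hU : UStmt m := by
      intro η β X Y A B hβη hA hB hm hvb
      rcases Nat.eq_zero_or_pos (nu β X) with hX | hX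
      · rcases Nat.eq_zero_or_pos (nu β Y) with hY | hY
        · omega
        · have hvb' : VB (.par Y B) (.par A X) :=
            ((sc_vb (SC.comm Y B)).trans hvb.symm).trans (sc_vb (SC.comm X A))
          have := ucore m ihU ihL hβη hB hA (by omega) hvb' hY
          omega
      · exact ucore m ihU ihL hβη hA hB hm hvb hX
    refine ⟨hU, ?_⟩
    intro η β X Y hβη hm hvb
    by_cases hsz : (satP η Y).size ≤ X.size
    · exact lcore m hU ihU ihL hβη hm hsz hvb
    · have h1 := satP_size_le η X
      have h2 := satP_size_le η Y
      have hvb' : VB (.par (.pre η Y) (satP η X)) (.par (satP η Y) (.pre η X)) :=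
        ((sc_vb (SC.comm _ _)).trans hvb.symm).trans (sc_vb (SC.comm _ _))
      exact (lcore m hU ihU ihL hβη (by omega) (by omega) hvb').symm

/-! #### ν-invariance and the theorem -/

lemma co_ne (a : Act) : a ≠ Act.co a := by cases a <;> simp [Act.co]

theorem nu_invariant {P Q : Proc} (h : VB P Q) (β : Act) : nu β P = nu β Q := by
  have hvb : VB (.par P .nil) (.par .nil Q) := by
    refine (sc_vb (SC.unit P)).trans (h.trans ?_)
    exact (sc_vb ((SC.comm Proc.nil Q).trans (SC.unit Q))).symm
  exact (UL (P.size + Q.size)).1 (Act.co β) β P Q .nil .nil (co_ne β)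
    trivial trivial le_rfl hvb
/-- there is no mixed diamond in microCCS. -/
theorem no_mixed_diamond :
    ¬ ∃ (η₁ η₂ : Act) (S S' T T' R : Proc), η₁ ≠ η₂ ∧
      Step S (.act η₁) S' ∧ Step T (.act η₂) T' ∧
      Bisim (.par (.pre η₂ S) (.par T' R)) (.par S' (.par (.pre η₁ T) R)) := by
  rintro ⟨η₁, η₂, S, S', T, T', R, hne, hS, hT, hB⟩
  have h := nu_invariant (bisim_vb hB) η₁
  have hT' := step_act_size hT rfl
  have hle := nu_le_size η₁ T'
  simp only [nu] at h
  rw [if_neg (fun hh : η₂ = η₁ => hne hh.symm)] at h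
  simp only [if_true, if_pos] at h
  omega
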